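/- arXiv:2010.05088 — 3 statements merged into one kernel-verified Lean document; each statement's English description precedes it below -/
import Mathlib

section
/- For every mass m > 0, lattice step ε > 0, and lattice point (x,t) ∈ εℤ² such that (x+t)/ε is an even integer and t > |x|, the probability P(x,t,m,ε) is nonzero. -/
/-!
Split the path sum by the direction of the last step. Deleting the last step of a path gives a
linear recurrence for the two partial sums, whose solution at the point `(a - b, a + b + 2)` is
`-p² G(-p²)` for paths ending to the right and `-i p F(-p²)` for paths ending to the left, where
`p = mε`, `F = ∑ C(a,s) C(b,s) X^s` and `G = ∑ C(a,s+1) C(b,s) X^s`. Since `-p²` is real, the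
amplitude can only vanish at a common root `q ∉ {0, 1}` of `F` and `G`. These polynomials satisfy
`(X - 1) F' = a F - (b + 1) G` and `X (X - 1) G' = (b X + 1) G - a F`. If the multiplicity of `q`
in `G` is at least its multiplicity `r` in `F`, the first equation makes `(X - q)^r` divide `F'`;
otherwise the second makes `(X - q)^s` divide `G'`, with `s` the multiplicity in `G`. Both are
impossible, since differentiation lowers the multiplicity of a root by exactly one.
-/

noncomputable section

/-- The `i`-th move of a checker path encoded as `f : Fin n → Bool`
(`true` = upwards-right move `(ε,ε)`, `false` = upwards-left move `(−ε,ε)`);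
out-of-range indices default to `true`. -/
def fcStep {n : ℕ} (f : Fin n → Bool) (i : ℕ) : Bool :=
  if h : i < n then f ⟨i, h⟩ else true

/-- The number of turns of the checker path `f`. -/
def fcTurns {n : ℕ} (f : Fin n → Bool) : ℕ :=
  ((Finset.range (n - 1)).filter fun i => fcStep f i ≠ fcStep f (i + 1)).card

/-- The position (in units of `ε`) of the checker path `f` after `i` moves,
starting from the origin. -/
def fcPos {n : ℕ} (f : Fin n → Bool) (i : ℕ) : ℤ :=
  ∑ j ∈ Finset.range i, (if fcStep f j then (1 : ℤ) else -1)

/-- Checker paths from `(0,0)` to `(εx, εn)` whose first step is to `(ε,ε)`. -/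
def fcPaths (n : ℕ) (x : ℤ) : Finset (Fin n → Bool) :=
  Finset.univ.filter fun f =>
    (∀ i : Fin n, (i : ℕ) = 0 → f i = true) ∧ fcPos f n = x

/-- The amplitude `a(εx, εn, m, ε)`. -/
def fcAmp (m ε : ℝ) (x : ℤ) (n : ℕ) : ℂ :=
  (((1 + m ^ 2 * ε ^ 2) ^ ((1 - (n : ℝ)) / 2) : ℝ) : ℂ) * Complex.I *
    ∑ f ∈ fcPaths n x, (-Complex.I * (m * ε)) ^ fcTurns f

/-- The probability `P(εx, εn, m, ε)` to find the electron at `(εx, εn)`. -/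
def fcP (m ε : ℝ) (x : ℤ) (n : ℕ) : ℝ := ‖fcAmp m ε x n‖ ^ 2

open Polynomial Finset

theorem Nat.cast_succ_mul_choose_succ {R : Type*} [CommRing R] (n k : ℕ) :
    ((k : R) + 1) * n.choose (k + 1) = ((n : R) - k) * n.choose k := by
  rcases le_or_gt k n with hk | hk
  · have h := congrArg (Nat.cast : ℕ → R) (Nat.choose_succ_right_eq n k)
    push_cast [hk] at h
    linear_combination h
  · simp [Nat.choose_eq_zero_of_lt hk, Nat.choose_eq_zero_of_lt (Nat.lt_succ_of_lt hk)]

theorem Polynomial.not_pow_rootMultiplicity_dvd_mul_derivative {K : Type*} [Field K] [CharZero K]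
    {P u : K[X]} {q : K} (hP : P ≠ 0) (hq : P.IsRoot q) (hu : ¬u.IsRoot q) :
    ¬(X - C q) ^ P.rootMultiplicity q ∣ u * derivative P := by
  intro h
  have hP' : derivative P ≠ 0 := by
    rw [Ne, derivative_eq_zero]
    exact (natDegree_pos_of_aeval_root hP hq (fun _ h => h)).ne'
  have hr : 0 < P.rootMultiplicity q := (rootMultiplicity_pos hP).2 hq
  have hu0 : u ≠ 0 := by rintro rfl; exact hu (by simp)
  have := (le_rootMultiplicity_iff (mul_ne_zero hu0 hP')).2 h
  rw [rootMultiplicity_mul (mul_ne_zero hu0 hP'),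
    rootMultiplicity_eq_zero hu, derivative_rootMultiplicity_of_root hq] at this
  omega

/- The coefficient of `X^s` counts the paths to `(a - b, a + b + 2)` with `2s + 1` turns
(`oddTurnPoly`) or with `2s + 2` turns ending to the right (`evenTurnPoly`): `a + 1` right and
`b + 1` left steps, cut into alternating runs. -/
def oddTurnPoly (a b : ℕ) : ℝ[X] :=
  ∑ s ∈ range (b + 1), C ((a.choose s * b.choose s : ℕ) : ℝ) * X ^ s

def evenTurnPoly (a b : ℕ) : ℝ[X] :=
  ∑ s ∈ range (b + 1), C ((a.choose (s + 1) * b.choose s : ℕ) : ℝ) * X ^ s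

theorem coeff_oddTurnPoly (a b k : ℕ) :
    (oddTurnPoly a b).coeff k = a.choose k * b.choose k := by
  rw [oddTurnPoly, finsetSum_coeff]
  simp only [coeff_C_mul_X_pow, sum_ite_eq, mem_range]
  split_ifs with h
  · push_cast; rfl
  · simp [Nat.choose_eq_zero_of_lt (by omega : b < k)]

theorem coeff_evenTurnPoly (a b k : ℕ) :
    (evenTurnPoly a b).coeff k = a.choose (k + 1) * b.choose k := by
  rw [evenTurnPoly, finsetSum_coeff]
  simp only [coeff_C_mul_X_pow, sum_ite_eq, mem_range]
  split_ifs with h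
  · push_cast; rfl
  · simp [Nat.choose_eq_zero_of_lt (by omega : b < k)]

theorem oddTurnPoly_ne_zero (a b : ℕ) : oddTurnPoly a b ≠ 0 := fun h => by
  simpa [coeff_oddTurnPoly] using congrArg (coeff · 0) h

theorem oddTurnPoly_zero_right (a : ℕ) : oddTurnPoly a 0 = 1 := by
  ext k; rcases k with _ | k <;> simp [coeff_oddTurnPoly, coeff_one]

theorem evenTurnPoly_zero_left (b : ℕ) : evenTurnPoly 0 b = 0 := by
  ext k; simp [coeff_evenTurnPoly]

theorem evenTurnPoly_succ_left (a b : ℕ) :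
    evenTurnPoly (a + 1) b = evenTurnPoly a b + oddTurnPoly a b := by
  ext k
  simp only [coeff_add, coeff_evenTurnPoly, coeff_oddTurnPoly, Nat.choose_succ_succ a k]
  push_cast; ring

theorem oddTurnPoly_succ_right (a b : ℕ) :
    oddTurnPoly a (b + 1) = oddTurnPoly a b + X * evenTurnPoly a b := by
  ext k
  rcases k with _ | k
  · simp [coeff_oddTurnPoly]
  · simp only [coeff_add, coeff_X_mul, coeff_evenTurnPoly, coeff_oddTurnPoly,
      Nat.choose_succ_succ b k]
    push_cast; ring

theorem X_sub_one_mul_derivative_oddTurnPoly (a b : ℕ) :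
    (X - 1) * derivative (oddTurnPoly a b)
      = C (a : ℝ) * oddTurnPoly a b - C ((b : ℝ) + 1) * evenTurnPoly a b := by
  ext k
  have ha := Nat.cast_succ_mul_choose_succ (R := ℝ) a k
  have hb := Nat.cast_succ_mul_choose_succ (R := ℝ) b k
  rcases k with _ | k
  · simp only [sub_mul, one_mul, coeff_sub, coeff_X_mul_zero, coeff_C_mul,
      coeff_derivative, coeff_oddTurnPoly, coeff_evenTurnPoly]
    push_cast at ha hb ⊢
    linear_combination -(a.choose 1 : ℝ) * hb + (b.choose 0 : ℝ) * ha
  · simp only [sub_mul, one_mul, coeff_sub, coeff_X_mul, coeff_C_mul,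
      coeff_derivative, coeff_oddTurnPoly, coeff_evenTurnPoly]
    push_cast at ha hb ⊢
    linear_combination -(a.choose (k + 2) : ℝ) * hb + (b.choose (k + 1) : ℝ) * ha

theorem X_mul_X_sub_one_mul_derivative_evenTurnPoly (a b : ℕ) :
    X * (X - 1) * derivative (evenTurnPoly a b)
      = (C (b : ℝ) * X + 1) * evenTurnPoly a b - C (a : ℝ) * oddTurnPoly a b := by
  ext k
  rcases k with _ | k
  · simp [coeff_oddTurnPoly, coeff_evenTurnPoly, mul_assoc, add_mul, Nat.choose_one_right]
  · have ha := Nat.cast_succ_mul_choose_succ (R := ℝ) a (k + 1)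
    have hb := Nat.cast_succ_mul_choose_succ (R := ℝ) b k
    simp only [mul_assoc, sub_mul, add_mul, one_mul, coeff_sub, coeff_add, coeff_X_mul,
      coeff_C_mul, coeff_derivative, coeff_oddTurnPoly, coeff_evenTurnPoly]
    rcases k with _ | k
    · simp at ha ⊢
      linear_combination -(b : ℝ) * ha
    · simp only [coeff_X_mul, coeff_derivative, coeff_evenTurnPoly]
      push_cast at ha hb ⊢
      linear_combination -(b.choose (k + 2) : ℝ) * ha + (a.choose (k + 2) : ℝ) * hb

theorem not_isRoot_oddTurnPoly_and_evenTurnPoly (a b : ℕ) {q : ℝ} (hq₀ : q ≠ 0)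
    (hq₁ : q ≠ 1) :
    ¬((oddTurnPoly a b).IsRoot q ∧ (evenTurnPoly a b).IsRoot q) := by
  rintro ⟨hF, hG⟩
  have hq₁' : ¬(X - 1 : ℝ[X]).IsRoot q := by simp [sub_eq_zero, hq₁]
  by_cases hGr : (X - C q) ^ (oddTurnPoly a b).rootMultiplicity q ∣ evenTurnPoly a b
  · refine not_pow_rootMultiplicity_dvd_mul_derivative (oddTurnPoly_ne_zero a b) hF hq₁' ?_
    rw [X_sub_one_mul_derivative_oddTurnPoly]
    exact dvd_sub ((pow_rootMultiplicity_dvd _ _).mul_left _) (hGr.mul_left _)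
  · have hG₀ : evenTurnPoly a b ≠ 0 := by rintro h; simp [h] at hGr
    have hlt : (evenTurnPoly a b).rootMultiplicity q < (oddTurnPoly a b).rootMultiplicity q := by
      by_contra! h
      exact hGr ((pow_dvd_pow _ h).trans (pow_rootMultiplicity_dvd _ _))
    refine not_pow_rootMultiplicity_dvd_mul_derivative hG₀ hG (u := X * (X - 1))
      (by simp [hq₀, sub_eq_zero, hq₁]) ?_
    rw [X_mul_X_sub_one_mul_derivative_evenTurnPoly]
    exact dvd_sub ((pow_rootMultiplicity_dvd _ _).mul_left _)
      (((pow_dvd_pow _ hlt.le).trans (pow_rootMultiplicity_dvd _ _)).mul_left _)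

theorem fcStep_snoc_of_lt {n : ℕ} (g : Fin n → Bool) (c : Bool) {i : ℕ} (hi : i < n) :
    fcStep (Fin.snoc g c : Fin (n + 1) → Bool) i = fcStep g i := by
  rw [fcStep, fcStep, dif_pos hi, dif_pos (by omega)]
  exact Fin.snoc_castSucc (α := fun _ => Bool) c g ⟨i, hi⟩

theorem fcStep_snoc_self {n : ℕ} (g : Fin n → Bool) (c : Bool) :
    fcStep (Fin.snoc g c : Fin (n + 1) → Bool) n = c := by
  rw [fcStep, dif_pos n.lt_succ_self]
  exact Fin.snoc_last (α := fun _ => Bool) c g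

theorem fcPos_snoc {n : ℕ} (g : Fin n → Bool) (c : Bool) :
    fcPos (Fin.snoc g c : Fin (n + 1) → Bool) (n + 1) = fcPos g n + if c then 1 else -1 := by
  rw [fcPos, sum_range_succ, fcStep_snoc_self, fcPos]
  congr 1
  exact sum_congr rfl fun j hj => by rw [fcStep_snoc_of_lt g c (mem_range.1 hj)]

theorem fcTurns_snoc {m : ℕ} (g : Fin (m + 1) → Bool) (c : Bool) :
    fcTurns (Fin.snoc g c : Fin (m + 2) → Bool)
      = fcTurns g + if fcStep g m ≠ c then 1 else 0 := by
  simp only [fcTurns, card_filter, Nat.add_sub_cancel, sum_range_succ, fcStep_snoc_self,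
    fcStep_snoc_of_lt g c m.lt_succ_self]
  congr 1
  exact sum_congr rfl fun i hi => by
    rw [fcStep_snoc_of_lt g c (by simp at hi; omega), fcStep_snoc_of_lt g c (by simp at hi; omega)]

theorem mem_fcPaths_succ {n : ℕ} {x : ℤ} (f : Fin (n + 1) → Bool) :
    f ∈ fcPaths (n + 1) x ↔ f 0 = true ∧ fcPos f (n + 1) = x := by
  simp only [fcPaths, mem_filter, mem_univ, true_and]
  refine and_congr_left fun _ => ⟨fun h => h 0 rfl, fun h i hi => ?_⟩
  rwa [show i = 0 from Fin.ext hi]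

theorem snoc_mem_fcPaths_iff {m : ℕ} (g : Fin (m + 1) → Bool) (c : Bool) (x : ℤ) :
    (Fin.snoc g c : Fin (m + 2) → Bool) ∈ fcPaths (m + 2) x ↔
      g ∈ fcPaths (m + 1) (x - if c then 1 else -1) := by
  have h0 : (Fin.snoc g c : Fin (m + 2) → Bool) 0 = g 0 :=
    Fin.snoc_castSucc (α := fun _ => Bool) c g 0
  rw [mem_fcPaths_succ, mem_fcPaths_succ, fcPos_snoc, h0, eq_sub_iff_add_eq]

theorem snoc_init_eq_self {m : ℕ} {f : Fin (m + 1) → Bool} {c : Bool} (hf : fcStep f m = c) :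
    Fin.snoc (Fin.init f) c = f := by
  rw [fcStep, dif_pos m.lt_succ_self] at hf
  exact hf ▸ Fin.snoc_init_self f

def lastStepTurnSum (w : ℂ) (n : ℕ) (x : ℤ) (c : Bool) : ℂ :=
  ∑ f ∈ (fcPaths n x).filter (fun f => fcStep f (n - 1) = c), w ^ fcTurns f

theorem sum_fcPaths_eq_lastStepTurnSum_true_add_false (w : ℂ) (n : ℕ) (x : ℤ) :
    ∑ f ∈ fcPaths n x, w ^ fcTurns f
      = lastStepTurnSum w n x true + lastStepTurnSum w n x false := by
  rw [lastStepTurnSum, lastStepTurnSum,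
    ← sum_filter_add_sum_filter_not _ (fun f => fcStep f (n - 1) = true)]
  simp only [Bool.not_eq_true]

theorem lastStepTurnSum_succ (w : ℂ) (m : ℕ) (x : ℤ) (c : Bool) :
    lastStepTurnSum w (m + 2) x c = lastStepTurnSum w (m + 1) (x - if c then 1 else -1) c
      + w * lastStepTurnSum w (m + 1) (x - if c then 1 else -1) (!c) := by
  simp only [lastStepTurnSum, Nat.add_sub_cancel, Nat.reduceSubDiff]
  have hsnoc : ∑ f ∈ (fcPaths (m + 2) x).filter (fun f => fcStep f (m + 1) = c), w ^ fcTurns f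
      = ∑ g ∈ fcPaths (m + 1) (x - if c then 1 else -1),
        w ^ (fcTurns g + if fcStep g m ≠ c then 1 else 0) := by
    refine sum_nbij' Fin.init (fun g => Fin.snoc g c) (fun f hf => ?_) (fun g hg => ?_)
      (fun f hf => snoc_init_eq_self (mem_filter.1 hf).2) (fun g _ => Fin.init_snoc _ _)
      (fun f hf => ?_)
    · rw [mem_filter] at hf
      rw [← snoc_mem_fcPaths_iff, snoc_init_eq_self hf.2]
      exact hf.1
    · exact mem_filter.2 ⟨(snoc_mem_fcPaths_iff g c x).2 hg, fcStep_snoc_self g c⟩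
    · rw [← fcTurns_snoc, snoc_init_eq_self (mem_filter.1 hf).2]
  rw [hsnoc, ← sum_filter_add_sum_filter_not _ (fun g => fcStep g m = c), mul_sum]
  congr 1
  · exact sum_congr rfl fun g hg => by simp [(mem_filter.1 hg).2]
  · refine sum_congr (filter_congr fun g _ => by cases c <;> simp) fun g hg => ?_
    rw [if_pos (by simp [(mem_filter.1 hg).2]), pow_succ']

theorem fcPos_le {n : ℕ} (f : Fin n → Bool) (i : ℕ) : fcPos f i ≤ i := by
  calc fcPos f i ≤ ∑ _j ∈ range i, (1 : ℤ) := sum_le_sum fun j _ => by split <;> norm_num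
    _ = i := by simp

theorem sub_le_fcPos {n : ℕ} {x : ℤ} {f : Fin (n + 1) → Bool} (hf : f ∈ fcPaths (n + 1) x) :
    1 - (n : ℤ) ≤ fcPos f (n + 1) := by
  have h0 : fcStep f 0 = true := by
    rw [fcStep, dif_pos n.succ_pos]; exact ((mem_fcPaths_succ f).1 hf).1
  have hrest : -(n : ℤ) ≤ ∑ j ∈ range n, if fcStep f (j + 1) then 1 else -1 :=
    calc -(n : ℤ) = ∑ _j ∈ range n, (-1 : ℤ) := by simp
      _ ≤ _ := sum_le_sum fun j _ => by split <;> norm_num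
  rw [fcPos, sum_range_succ', h0, if_pos rfl]
  linarith

theorem fcPaths_eq_empty {n : ℕ} {x : ℤ} (hx : x < 1 - n ∨ (n : ℤ) + 1 < x) :
    fcPaths (n + 1) x = ∅ := by
  refine eq_empty_of_forall_notMem fun f hf => ?_
  have := fcPos_le f (n + 1)
  have := sub_le_fcPos hf
  rw [((mem_fcPaths_succ f).1 hf).2] at *
  push_cast at *
  omega

theorem fcPaths_self (n : ℕ) : fcPaths (n + 1) (n + 1) = {fun _ => true} := by
  ext f
  rw [mem_singleton, mem_fcPaths_succ]
  constructor
  · rintro ⟨-, hpos⟩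
    have hall := (sum_eq_sum_iff_of_le (f := fun j => if fcStep f j then (1 : ℤ) else -1)
      (g := fun _ => 1) (s := range (n + 1)) fun j _ => by split <;> norm_num).1
      (by simpa [fcPos] using hpos)
    funext i
    simpa [fcStep, Nat.lt_succ_iff.1 i.2] using hall i (mem_range.2 i.2)
  · rintro rfl
    simp [fcPos, fcStep]

theorem lastStepTurnSum_self (w : ℂ) (n : ℕ) (c : Bool) :
    lastStepTurnSum w (n + 1) (n + 1) c = if c then 1 else 0 := by
  have hstep (i : ℕ) : fcStep (fun _ : Fin (n + 1) => true) i = true := by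
    unfold fcStep; split <;> rfl
  have hturns : fcTurns (fun _ : Fin (n + 1) => true) = 0 := by simp [fcTurns, hstep]
  rw [lastStepTurnSum, fcPaths_self, Nat.add_sub_cancel, filter_singleton, hstep]
  cases c <;> simp [hturns]

theorem lastStepTurnSum_eq_zero {n : ℕ} {x : ℤ} (hx : x < 1 - n ∨ (n : ℤ) + 1 < x) (w : ℂ)
    (c : Bool) :
    lastStepTurnSum w (n + 1) x c = 0 := by
  simp [lastStepTurnSum, fcPaths_eq_empty hx]

open Complex in
theorem lastStepTurnSum_eq_eval_turnPoly (p : ℝ) (a b : ℕ) :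
    lastStepTurnSum (-I * p) (a + b + 2) (a - b) true
        = ((-p ^ 2 * (evenTurnPoly a b).eval (-p ^ 2) : ℝ) : ℂ) ∧
      lastStepTurnSum (-I * p) (a + b + 2) (a - b) false
        = -I * p * ((oddTurnPoly a b).eval (-p ^ 2) : ℝ) := by
  rw [lastStepTurnSum_succ, lastStepTurnSum_succ]
  simp only [↓reduceIte, Bool.not_true, Bool.not_false, Bool.false_eq_true, sub_neg_eq_add]
  constructor
  · cases a with
    | zero =>
      have hx : ((0 : ℕ) : ℤ) - b - 1 < 1 - (0 + b : ℕ) := by push_cast; omega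
      rw [lastStepTurnSum_eq_zero (.inl hx), lastStepTurnSum_eq_zero (.inl hx),
        evenTurnPoly_zero_left]
      simp
    | succ a =>
      obtain ⟨h₁, h₂⟩ := lastStepTurnSum_eq_eval_turnPoly p a b
      rw [show a + 1 + b + 1 = a + b + 2 by omega,
        show ((a + 1 : ℕ) : ℤ) - b - 1 = a - b by push_cast; ring,
        h₁, h₂, evenTurnPoly_succ_left, eval_add]
      push_cast
      linear_combination (p ^ 2 * (((oddTurnPoly a b).eval (-p ^ 2) : ℝ) : ℂ)) * I_sq
  · cases b with
    | zero =>
      rw [show (a : ℤ) - (0 : ℕ) + 1 = a + 1 by push_cast; ring, add_zero, lastStepTurnSum_self,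
        lastStepTurnSum_self, oddTurnPoly_zero_right]
      simp
    | succ b =>
      obtain ⟨h₁, h₂⟩ := lastStepTurnSum_eq_eval_turnPoly p a b
      rw [show a + (b + 1) + 1 = a + b + 2 by omega,
        show (a : ℤ) - (b + 1 : ℕ) + 1 = a - b by push_cast; ring,
        h₁, h₂, oddTurnPoly_succ_right, eval_add, eval_mul, eval_X]
      push_cast
      ring
termination_by a + b

theorem exists_eq_add_add_two_of_abs_lt {X : ℤ} {n : ℕ} (hX : |X| < n) (heven : Even (X + n)) :
    ∃ a b : ℕ, n = a + b + 2 ∧ X = a - b := by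
  obtain ⟨r, hr⟩ := heven
  rw [abs_lt] at hX
  exact ⟨(r - 1).toNat, (n - r - 1).toNat, by omega, by omega⟩

/-- The probability to find an electron vanishes nowhere inside the light cone:
for `m > 0`, `ε > 0` and a lattice point `(x,t) = (εX, εn) ∈ εℤ²` with `(x+t)/ε` even
and `t > |x|`, we have `P(x,t,m,ε) ≠ 0`. -/
theorem stmt0 (m ε : ℝ) (hm : 0 < m) (hε : 0 < ε) (x t : ℝ) (X : ℤ) (n : ℕ)
    (hx : x = ε * X) (ht : t = ε * n) (heven : Even (X + (n : ℤ)))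
    (hlt : |x| < t) :
    fcP m ε X n ≠ 0 := by
  have hXn : |X| < n := by
    rw [hx, ht, abs_mul, abs_of_pos hε] at hlt
    exact_mod_cast lt_of_mul_lt_mul_left hlt hε.le
  obtain ⟨a, b, rfl, rfl⟩ := exists_eq_add_add_two_of_abs_lt hXn heven
  have hp : m * ε ≠ 0 := (mul_pos hm hε).ne'
  have hroots := not_isRoot_oddTurnPoly_and_evenTurnPoly a b (q := -(m * ε) ^ 2)
    (by simpa using hp) (by nlinarith [sq_nonneg (m * ε)])
  obtain ⟨hR, hL⟩ := lastStepTurnSum_eq_eval_turnPoly (m * ε) a b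
  rw [fcP, fcAmp, ← Complex.ofReal_mul, sum_fcPaths_eq_lastStepTurnSum_true_add_false, hR, hL]
  refine pow_ne_zero 2 (norm_ne_zero_iff.2 (mul_ne_zero (mul_ne_zero ?_ Complex.I_ne_zero) ?_))
  · exact_mod_cast (Real.rpow_pos_of_pos (by positivity) _).ne'
  · generalize m * ε = p at hp hroots
    intro h
    have := Complex.ext_iff.1 h
    simp [hp, -Complex.ofReal_pow] at this
    exact hroots ⟨this.2, this.1⟩
end
end

section
/- There is a constant C > 0 such that for every ε > 0 and every T ∈ εℤ₊, taking mass m = 1/ε, we have |Σ_{x∈εℤ} (x/T)·(a₁(x,T,1/ε,ε)² + a₂(x,T,1/ε,ε)²) − (1 − 1/√2)| ≤ C·ε/T. -/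
noncomputable section

/-!
For `m = 1/ε` every turn has weight `-i`, and `2^(n/2) a` satisfies an integral two-component
recursion `(U, V)`. Summing the recursion against `1` and against `x` gives `∑ (U² + V²) = 2ⁿ` and
`Mₙ₊₁ = 2 Mₙ + 2ⁿ⁺¹ - 2 Bₙ₊₁` for the first moment `M` and `B = ∑ V²`; evolving `n` steps forward
from the origin and `n` steps backward from `0` shows `Bₙ₊₁ - 2 Bₙ = V₂ₙ₊₁(0)`. This central value
is the coefficient of `Xⁿ` in `(1 - X²)ⁿ`, so the `2 Bₙ / 2ⁿ` are partial sums of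
`∑ (-1)ᵏ C(2k, k) / 4ᵏ = 1/√2`. The integrals `Jₖ = ∫₀^π sin²ᵏ x / (1 + sin² x)` satisfy
`Jₖ + Jₖ₊₁ = π C(2k, k) / 4ᵏ` (Wallis) and `J₀ = π/√2`, so these partial sums miss `1/√2` by
`± Jₖ / π`; as `Jₖ` decreases, the accumulated errors are alternating sums bounded by `2π`, whence
`Mₙ / 2ⁿ = (1 - 1/√2)(n + 1) + O(1)`.
-/

open Finset

theorem Finset.sum_range_comp_div_two {M : Type*} [AddCommMonoid M] (f : ℕ → M) (N : ℕ) :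
    ∑ n ∈ range N, f (n / 2) = ∑ k ∈ range (N / 2), f k + ∑ k ∈ range ((N + 1) / 2), f k := by
  induction N with
  | zero => simp
  | succ N ih =>
    rw [sum_range_succ, ih, show (N + 1 + 1) / 2 = N / 2 + 1 by omega, sum_range_succ]
    abel

theorem Antitone.sum_range_neg_one_pow_mul_mem_Icc {R : Type*} [Ring R] [PartialOrder R]
    [IsOrderedAddMonoid R] {a : ℕ → R} (ha : Antitone a) (h₀ : ∀ k, 0 ≤ a k) (K : ℕ) :
    ∑ k ∈ range K, (-1) ^ k * a k ∈ Set.Icc 0 (a 0) := by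
  induction K generalizing a with
  | zero => simpa using h₀ 0
  | succ K ih =>
    obtain ⟨hlo, hhi⟩ := ih (a := fun k => a (k + 1)) (fun _ _ h => ha (by omega)) fun k => h₀ _
    rw [zero_add] at hhi
    simp only [sum_range_succ', pow_succ, mul_neg_one, neg_mul, sum_neg_distrib, pow_zero, one_mul,
      neg_add_eq_sub]
    exact ⟨sub_nonneg.mpr (hhi.trans (ha zero_le_one)), sub_le_self _ hlo⟩

open Polynomial in
theorem Polynomial.coeff_one_sub_X_pow (R : Type*) [CommRing R] (n k : ℕ) :
    ((1 - X : R[X]) ^ n).coeff k = (-1) ^ k * n.choose k := by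
  have h : ∀ j, (-X : R[X]) ^ j * 1 ^ (n - j) * (n.choose j : R[X]) =
      C ((-1 : R) ^ j * n.choose j) * X ^ j := fun j => by
    rw [neg_pow, one_pow, mul_one, C_mul, C_pow, C_neg, C_1, C_eq_natCast]
    ring
  rw [sub_eq_add_neg, add_comm, add_pow, finsetSum_coeff]
  simp only [h, coeff_C_mul_X_pow, sum_ite_eq, mem_range]
  split_ifs with hk
  · rfl
  · rw [Nat.choose_eq_zero_of_lt (by omega), Nat.cast_zero, mul_zero]

theorem Nat.centralBinom_div_four_pow (k : ℕ) :
    (k.centralBinom : ℝ) / 4 ^ k = ∏ i ∈ range k, (2 * i + 1 : ℝ) / (2 * i + 2) := by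
  induction k with
  | zero => simp
  | succ k ih =>
    have h : ((k + 1) * (k + 1).centralBinom : ℝ) = 2 * (2 * k + 1) * k.centralBinom := by
      exact_mod_cast Nat.succ_mul_centralBinom_succ k
    rw [prod_range_succ, ← ih, pow_succ]
    field_simp
    linear_combination 2 * h

open Real in
/-- On `(-π/2, π/2)` the antiderivative is `arctan (√2 tan x)`; subtracting `x` through the
addition formula for `arctan` leaves an expression that is smooth on all of `ℝ`. -/
theorem Real.hasDerivAt_sqrt_two_div_one_add_sin_sq (x : ℝ) :
    HasDerivAt (fun x => x + arctan ((√2 - 1) * (sin x * cos x) / (1 + (√2 - 1) * sin x ^ 2)))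
      (√2 / (1 + sin x ^ 2)) x := by
  set k := √2 - 1
  have hD : 0 < 1 + k * sin x ^ 2 := by
    have : 0 ≤ k := sub_nonneg.mpr (Real.one_le_sqrt.mpr one_le_two)
    positivity
  have hsc : HasDerivAt (fun x => sin x * cos x) (cos x * cos x - sin x * sin x) x := by
    simpa [sub_eq_add_neg] using (hasDerivAt_sin x).fun_mul (hasDerivAt_cos x)
  have hs2 : HasDerivAt (fun x => sin x ^ 2) (2 * sin x * cos x) x := by
    simpa using (hasDerivAt_sin x).fun_pow 2
  have hg := (hsc.const_mul k).fun_div ((hs2.const_mul k).const_add 1) hD.ne'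
  refine ((hasDerivAt_id' x).fun_add hg.arctan).congr_deriv ?_
  have hpyth := sin_sq_add_cos_sq x
  have h2 : √2 ^ 2 = 2 := Real.sq_sqrt zero_le_two
  have hE : (1 + k * sin x ^ 2) ^ 2 + (k * (sin x * cos x)) ^ 2 = 1 + sin x ^ 2 := by
    linear_combination (k ^ 2 * sin x ^ 2) * hpyth + sin x ^ 2 * h2
  have hN : k * (cos x * cos x - sin x * sin x) * (1 + k * sin x ^ 2) -
      k * (sin x * cos x) * (k * (2 * sin x * cos x)) = √2 - (1 + sin x ^ 2) := by
    linear_combination (k - k ^ 2 * sin x ^ 2) * hpyth - sin x ^ 2 * h2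
  have hS : 0 < 1 + sin x ^ 2 := by positivity
  rw [div_pow, one_add_div (pow_pos hD 2).ne', hE, hN]
  generalize 1 + k * sin x ^ 2 = D at hD
  field_simp
  ring

namespace FeynmanCheckers

/-- `(U n x, V n x)` is `2 ^ (n / 2)` times `(a₂, a₁)` at `(εx, ε(n + 1))` for the mass `1/ε`
(see `fcAmp_one_div_self`). -/
def UV : ℕ → ℤ → ℝ × ℝ
  | 0, x => (if x = 1 then 1 else 0, 0)
  | n + 1, x => ((UV n (x - 1)).1 - (UV n (x - 1)).2, (UV n (x + 1)).1 + (UV n (x + 1)).2)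

def U (n : ℕ) (x : ℤ) : ℝ := (UV n x).1

def V (n : ℕ) (x : ℤ) : ℝ := (UV n x).2

lemma U_zero (x : ℤ) : U 0 x = if x = 1 then 1 else 0 := rfl

lemma V_zero (x : ℤ) : V 0 x = 0 := rfl

lemma U_succ (n : ℕ) (x : ℤ) : U (n + 1) x = U n (x - 1) - V n (x - 1) := rfl

lemma V_succ (n : ℕ) (x : ℤ) : V (n + 1) x = U n (x + 1) + V n (x + 1) := rfl

lemma U_eq_zero_and_V_eq_zero (n : ℕ) (x : ℤ) :
    ((n : ℤ) + 1 < x ∨ x < 1 - n → U n x = 0) ∧ ((n : ℤ) ≤ x ∨ x ≤ -n → V n x = 0) := by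
  induction n generalizing x with
  | zero => exact ⟨fun hx => if_neg (by omega), fun _ => rfl⟩
  | succ n ih =>
    push_cast
    refine ⟨fun hx => ?_, fun hx => ?_⟩
    · rw [U_succ, (ih _).1 (by omega), (ih _).2 (by omega), sub_zero]
    · rw [V_succ, (ih _).1 (by omega), (ih _).2 (by omega), add_zero]

lemma U_eq_zero {n : ℕ} {x : ℤ} (h : (n : ℤ) + 1 < x ∨ x < 1 - n) : U n x = 0 :=
  (U_eq_zero_and_V_eq_zero n x).1 h

lemma V_eq_zero {n : ℕ} {x : ℤ} (h : (n : ℤ) ≤ x ∨ x ≤ -n) : V n x = 0 :=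
  (U_eq_zero_and_V_eq_zero n x).2 h

lemma U_self_add_one (n : ℕ) : U n (n + 1) = 1 := by
  induction n with
  | zero => rfl
  | succ n ih =>
    rw [U_succ, show ((n + 1 : ℕ) : ℤ) + 1 - 1 = n + 1 by push_cast; ring, ih,
      V_eq_zero (by omega), sub_zero]

lemma V_succ_self (n : ℕ) : V (n + 1) n = 1 := by
  rw [V_succ, U_self_add_one, V_eq_zero (by omega), add_zero]

lemma V_succ_neg_self (n : ℕ) : V (n + 1) (-n) = 1 := by
  induction n with
  | zero => simp [V_succ, U_zero, V_zero]
  | succ n ih =>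
    rw [V_succ, U_succ, show -((n + 1 : ℕ) : ℤ) + 1 - 1 = -n - 1 by push_cast; ring,
      U_eq_zero (by omega), V_eq_zero (by omega),
      show -((n + 1 : ℕ) : ℤ) + 1 = -n by push_cast; ring, ih]
    ring

lemma V_add_two (n : ℕ) (x : ℤ) :
    V (n + 2) x = V (n + 1) (x - 1) + V (n + 1) (x + 1) - 2 * V n x := by
  simp only [V_succ, U_succ, sub_add_cancel, add_sub_cancel_right]
  ring

lemma summable_comp_UV_add (n : ℕ) (c : ℤ) (g : ℤ → ℝ → ℝ → ℝ) (hg : ∀ x, g x 0 0 = 0) :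
    Summable fun x => g x (U n (x + c)) (V n (x + c)) := by
  refine summable_of_hasFiniteSupport <| show Set.Finite _ from
    (Set.finite_Icc (-n - c) (n + 1 - c)).subset fun x hx => ?_
  by_contra h
  rw [Set.mem_Icc, not_and_or, not_le, not_le] at h
  exact hx (show g x _ _ = 0 by rw [U_eq_zero (by omega), V_eq_zero (by omega), hg])

lemma summable_comp_UV (n : ℕ) (g : ℤ → ℝ → ℝ → ℝ) (hg : ∀ x, g x 0 0 = 0) :
    Summable fun x => g x (U n x) (V n x) := by
  simpa using summable_comp_UV_add n 0 g hg

def sumSqV (n : ℕ) : ℝ := ∑' x, V n x ^ 2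

def sumUV (n : ℕ) : ℝ := ∑' x, U n x * V n x

def moment (n : ℕ) : ℝ := ∑' x : ℤ, x * (U n x ^ 2 + V n x ^ 2)

lemma tsum_mul_sq_add_sq_succ (w : ℤ → ℝ) (n : ℕ) :
    ∑' x, w x * (U (n + 1) x ^ 2 + V (n + 1) x ^ 2) =
      ∑' x, (w (x + 1) * (U n x - V n x) ^ 2 + w (x - 1) * (U n x + V n x) ^ 2) := by
  have hl : Summable fun x => w x * (U n (x - 1) - V n (x - 1)) ^ 2 :=
    summable_comp_UV_add n (-1) (fun x u v => w x * (u - v) ^ 2) (by simp)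
  have hr : Summable fun x => w x * (U n (x + 1) + V n (x + 1)) ^ 2 :=
    summable_comp_UV_add n 1 (fun x u v => w x * (u + v) ^ 2) (by simp)
  have shift_l : ∑' x, w x * (U n (x - 1) - V n (x - 1)) ^ 2 =
      ∑' x, w (x + 1) * (U n x - V n x) ^ 2 :=
    (tsum_congr fun x => by simp).trans
      ((Equiv.subRight 1).tsum_eq fun x => w (x + 1) * (U n x - V n x) ^ 2)
  have shift_r : ∑' x, w x * (U n (x + 1) + V n (x + 1)) ^ 2 =
      ∑' x, w (x - 1) * (U n x + V n x) ^ 2 :=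
    (tsum_congr fun x => by simp).trans
      ((Equiv.addRight 1).tsum_eq fun x => w (x - 1) * (U n x + V n x) ^ 2)
  simp only [U_succ, V_succ, mul_add]
  rw [hl.tsum_add hr, shift_l, shift_r, ← Summable.tsum_add]
  · exact summable_comp_UV n (fun x u v => w (x + 1) * (u - v) ^ 2) (by simp)
  · exact summable_comp_UV n (fun x u v => w (x - 1) * (u + v) ^ 2) (by simp)

lemma tsum_sq_add_sq (n : ℕ) : ∑' x, (U n x ^ 2 + V n x ^ 2) = 2 ^ n := by
  induction n with
  | zero => simp [U_zero, V_zero, tsum_ite_eq]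
  | succ n ih =>
    have h := tsum_mul_sq_add_sq_succ (fun _ => 1) n
    simp only [one_mul] at h
    rw [h, pow_succ, ← ih, mul_comm, ← tsum_mul_left]
    exact tsum_congr fun x => by ring

lemma sumSqV_succ (n : ℕ) : sumSqV (n + 1) = 2 ^ n + 2 * sumUV n := by
  rw [sumSqV, sumUV, ← tsum_sq_add_sq, ← tsum_mul_left, ← Summable.tsum_add
    (summable_comp_UV n (fun _ u v => u ^ 2 + v ^ 2) (by simp))
    (summable_comp_UV n (fun _ u v => 2 * (u * v)) (by simp))]
  simp only [V_succ]
  exact ((Equiv.addRight 1).tsum_eq fun x => (U n x + V n x) ^ 2).trans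
    (tsum_congr fun x => by ring)

lemma moment_succ (n : ℕ) : moment (n + 1) = 2 * moment n - 4 * sumUV n := by
  rw [moment, tsum_mul_sq_add_sq_succ, moment, sumUV, ← tsum_mul_left, ← tsum_mul_left,
    ← Summable.tsum_sub (summable_comp_UV n (fun x u v => 2 * (x * (u ^ 2 + v ^ 2))) (by simp))
    (summable_comp_UV n (fun _ u v => 4 * (u * v)) (by simp))]
  exact tsum_congr fun x => by push_cast; ring

lemma moment_zero : moment 0 = 1 := by
  rw [moment, tsum_eq_single 1 fun x hx => by simp [U_zero, V_zero, hx]]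
  simp [U_zero, V_zero]

/-- `a` steps evolved forward from the origin, paired with `b` steps evolved backward from `y`. -/
def pairing (a b : ℕ) (y : ℤ) : ℝ :=
  ∑' x, (U a x * (U b (x - y) + V b (x - y)) + V a x * (U b (x - y) - V b (x - y)))

lemma pairing_zero_right (a : ℕ) (y : ℤ) : pairing a 0 y = V (a + 1) y := by
  rw [pairing, tsum_eq_single (y + 1) fun x hx => by rw [U_zero, V_zero, if_neg (by omega)]; simp]
  simp [U_zero, V_zero, V_succ]

lemma pairing_succ_left (a b : ℕ) (y : ℤ) : pairing (a + 1) b y = pairing a (b + 1) y := by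
  have h₁ : Summable fun x => (U a (x - 1) - V a (x - 1)) * (U b (x - y) + V b (x - y)) :=
    summable_comp_UV_add a (-1) (fun x u v => (u - v) * (U b (x - y) + V b (x - y))) (by simp)
  have h₂ : Summable fun x => (U a (x + 1) + V a (x + 1)) * (U b (x - y) - V b (x - y)) :=
    summable_comp_UV_add a 1 (fun x u v => (u + v) * (U b (x - y) - V b (x - y))) (by simp)
  have h₃ : Summable fun x => (U a x - V a x) * (U b (x + 1 - y) + V b (x + 1 - y)) :=
    summable_comp_UV a (fun x u v => (u - v) * (U b (x + 1 - y) + V b (x + 1 - y))) (by simp)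
  have h₄ : Summable fun x => (U a x + V a x) * (U b (x - 1 - y) - V b (x - 1 - y)) :=
    summable_comp_UV a (fun x u v => (u + v) * (U b (x - 1 - y) - V b (x - 1 - y))) (by simp)
  calc pairing (a + 1) b y
      = ∑' x, (U a (x - 1) - V a (x - 1)) * (U b (x - y) + V b (x - y)) +
          ∑' x, (U a (x + 1) + V a (x + 1)) * (U b (x - y) - V b (x - y)) := h₁.tsum_add h₂
    _ = ∑' x, (U a x - V a x) * (U b (x + 1 - y) + V b (x + 1 - y)) +
          ∑' x, (U a x + V a x) * (U b (x - 1 - y) - V b (x - 1 - y)) := by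
        congr 1
        · refine (tsum_congr fun x => ?_).trans ((Equiv.subRight 1).tsum_eq fun x =>
            (U a x - V a x) * (U b (x + 1 - y) + V b (x + 1 - y)))
          simp
        · refine (tsum_congr fun x => ?_).trans ((Equiv.addRight 1).tsum_eq fun x =>
            (U a x + V a x) * (U b (x - 1 - y) - V b (x - 1 - y)))
          simp
    _ = pairing a (b + 1) y := by
        rw [← h₃.tsum_add h₄, pairing]
        refine tsum_congr fun x => ?_
        rw [U_succ, V_succ, sub_right_comm x y, sub_add_eq_add_sub x y]
        ring

lemma V_add_add_one (a b : ℕ) (y : ℤ) : V (a + b + 1) y = pairing a b y := by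
  induction b generalizing a with
  | zero => exact (pairing_zero_right a y).symm
  | succ b ih => rw [← pairing_succ_left, ← ih, add_right_comm a, ← add_assoc]

lemma V_two_mul_add_one_zero (n : ℕ) :
    V (2 * n + 1) 0 = 2 ^ n - 2 * sumSqV n + 2 * sumUV n := by
  have hP := summable_comp_UV n (fun _ u v => u ^ 2 + v ^ 2) (by simp)
  have hB := summable_comp_UV n (fun _ u v => 2 * v ^ 2) (by simp)
  have hD := summable_comp_UV n (fun _ u v => 2 * (u * v)) (by simp)
  rw [two_mul, V_add_add_one, pairing, sumSqV, sumUV, ← tsum_sq_add_sq, ← tsum_mul_left,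
    ← tsum_mul_left, ← hP.tsum_sub hB, ← (hP.sub hB).tsum_add hD]
  exact tsum_congr fun x => by rw [sub_zero]; ring

lemma sumSqV_succ_eq (n : ℕ) : sumSqV (n + 1) = 2 * sumSqV n + V (2 * n + 1) 0 := by
  rw [sumSqV_succ, V_two_mul_add_one_zero]
  ring

section ClosedForm

open Polynomial

def vCoeff (a b : ℕ) : ℝ := ((1 - X) ^ a * (1 + X) ^ b : ℝ[X]).coeff b

lemma vCoeff_zero_right (a : ℕ) : vCoeff a 0 = 1 := by
  simp [vCoeff, coeff_zero_eq_eval_zero]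

lemma vCoeff_zero_left (b : ℕ) : vCoeff 0 b = 1 := by
  simp [vCoeff, coeff_one_add_X_pow]

lemma vCoeff_succ_succ (a b : ℕ) :
    vCoeff (a + 1) (b + 1) = vCoeff a (b + 1) + vCoeff (a + 1) b - 2 * vCoeff a b := by
  set Q : ℝ[X] := (1 - X) ^ a * (1 + X) ^ b
  have h₁ : (1 - X) ^ (a + 1) * (1 + X) ^ (b + 1) = Q - X * (X * Q) := by ring
  have h₂ : (1 - X) ^ a * (1 + X) ^ (b + 1) = Q + X * Q := by ring
  have h₃ : (1 - X) ^ (a + 1) * (1 + X) ^ b = Q - X * Q := by ring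
  simp only [vCoeff, h₁, h₂, h₃, coeff_sub, coeff_add, coeff_X_mul]
  ring

lemma V_add_add_one_sub (a b : ℕ) : V (a + b + 1) (a - b) = vCoeff a b := by
  induction a generalizing b with
  | zero => simpa [vCoeff_zero_left] using V_succ_neg_self b
  | succ a iha =>
    induction b with
    | zero => simpa [vCoeff_zero_right] using V_succ_self (a + 1)
    | succ b ihb =>
      have h := V_add_two (a + b + 1) ((a + 1 : ℕ) - (b + 1 : ℕ))
      rw [show a + b + 1 + 2 = a + 1 + (b + 1) + 1 by omega] at h
      rw [h, vCoeff_succ_succ, ← iha, ← ihb, ← iha]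
      push_cast
      ring_nf

lemma vCoeff_self (n : ℕ) :
    vCoeff n n = if 2 ∣ n then (-1 : ℝ) ^ (n / 2) * n.choose (n / 2) else 0 := by
  have h : ((1 - X) ^ n * (1 + X) ^ n : ℝ[X]) = expand ℝ 2 ((1 - X) ^ n) := by
    rw [← mul_pow, map_pow]
    simp only [map_sub, map_one, expand_X]
    ring
  rw [vCoeff, h, coeff_expand two_pos, coeff_one_sub_X_pow]

end ClosedForm

lemma V_four_mul_add_one_zero (k : ℕ) : V (4 * k + 1) 0 = (-1) ^ k * k.centralBinom := by
  have h := V_add_add_one_sub (2 * k) (2 * k)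
  rw [vCoeff_self, if_pos (dvd_mul_right 2 k), Nat.mul_div_cancel_left k two_pos,
    ← Nat.centralBinom_eq_two_mul_choose] at h
  simpa [← two_mul, ← mul_assoc] using h

lemma V_four_mul_add_three_zero (k : ℕ) : V (4 * k + 3) 0 = 0 := by
  have h := V_add_add_one_sub (2 * k + 1) (2 * k + 1)
  rw [vCoeff_self, if_neg (by omega)] at h
  simpa [show 2 * k + 1 + (2 * k + 1) + 1 = 4 * k + 3 by ring] using h

lemma sumSqV_eq (n : ℕ) :
    sumSqV n = 2 ^ n / 2 * ∑ k ∈ range ((n + 1) / 2), (-1) ^ k * (k.centralBinom / 4 ^ k : ℝ) := by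
  induction n with
  | zero => simp [sumSqV, V_zero]
  | succ n ih =>
    rw [sumSqV_succ_eq, ih]
    obtain ⟨k, rfl | rfl⟩ := Nat.even_or_odd' n
    · rw [show 2 * (2 * k) + 1 = 4 * k + 1 by ring, V_four_mul_add_one_zero,
        show (2 * k + 1) / 2 = k by omega, show (2 * k + 1 + 1) / 2 = k + 1 by omega,
        sum_range_succ, pow_succ, pow_mul, show (2 : ℝ) ^ 2 = 4 by norm_num]
      field_simp
    · rw [show 2 * (2 * k + 1) + 1 = 4 * k + 3 by ring, V_four_mul_add_three_zero,
        show (2 * k + 1 + 1) / 2 = (2 * k + 1 + 1 + 1) / 2 by omega]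
      ring

section Paths

open Complex

lemma fcStep_snoc_of_lt {n : ℕ} (g : Fin n → Bool) (b : Bool) {j : ℕ} (hj : j < n) :
    fcStep (Fin.snoc g b : Fin (n + 1) → Bool) j = fcStep g j := by
  simp only [fcStep, dif_pos hj, dif_pos (Nat.lt_succ_of_lt hj)]
  exact Fin.snoc_castSucc (α := fun _ => Bool) (i := ⟨j, hj⟩) ..

lemma fcStep_snoc_self {n : ℕ} (g : Fin n → Bool) (b : Bool) :
    fcStep (Fin.snoc g b : Fin (n + 1) → Bool) n = b := by
  simp only [fcStep, dif_pos n.lt_succ_self]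
  exact Fin.snoc_last (α := fun _ => Bool) ..

lemma fcPos_snoc {n : ℕ} (g : Fin n → Bool) (b : Bool) :
    fcPos (Fin.snoc g b : Fin (n + 1) → Bool) (n + 1) = fcPos g n + if b then 1 else -1 := by
  rw [fcPos, sum_range_succ, fcStep_snoc_self, fcPos]
  congr 1
  exact sum_congr rfl fun j hj => by rw [fcStep_snoc_of_lt g b (mem_range.mp hj)]

lemma fcTurns_snoc {n : ℕ} (g : Fin (n + 1) → Bool) (b : Bool) :
    fcTurns (Fin.snoc g b : Fin (n + 2) → Bool) = fcTurns g + if fcStep g n = b then 0 else 1 := by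
  have hlt : ∀ i ∈ range n, (fcStep (Fin.snoc g b : Fin (n + 2) → Bool) i ≠
      fcStep (Fin.snoc g b : Fin (n + 2) → Bool) (i + 1) ↔ fcStep g i ≠ fcStep g (i + 1)) :=
    fun i hi => by
      have hi : i + 1 < n + 1 := by simpa using hi
      rw [fcStep_snoc_of_lt g b (by omega), fcStep_snoc_of_lt g b hi]
  rw [fcTurns, fcTurns, show n + 2 - 1 = n + 1 from rfl, range_add_one, filter_insert,
    fcStep_snoc_of_lt g b n.lt_succ_self, fcStep_snoc_self, filter_congr hlt, Nat.add_sub_cancel]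
  by_cases h : fcStep g n = b
  · simp [h]
  · rw [if_pos h, if_neg h, card_insert_of_notMem (by simp)]

lemma snoc_mem_fcPaths {n : ℕ} (g : Fin (n + 1) → Bool) (b : Bool) (x : ℤ) :
    Fin.snoc g b ∈ fcPaths (n + 2) x ↔ g ∈ fcPaths (n + 1) (x - if b then 1 else -1) := by
  simp only [fcPaths, mem_filter, mem_univ, true_and, fcPos_snoc, eq_sub_iff_add_eq]
  refine and_congr_left' ⟨fun h i hi => ?_, fun h i hi => ?_⟩
  · simpa using h i.castSucc hi
  · obtain rfl : i = (0 : Fin (n + 1)).castSucc := Fin.ext hi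
    simpa using h 0 rfl

lemma eq_snoc_of_fcStep_last {n : ℕ} (f : Fin (n + 1) → Bool) {σ : Bool} (h : fcStep f n = σ) :
    f = Fin.snoc (Fin.init f) σ := by
  rw [← h, fcStep, dif_pos n.lt_succ_self]
  exact (Fin.snoc_init_self f).symm

lemma sum_fcPaths_filter_fcStep_last {n : ℕ} (x : ℤ) (σ : Bool) (w : (Fin (n + 2) → Bool) → ℂ) :
    ∑ f ∈ fcPaths (n + 2) x with fcStep f (n + 1) = σ, w f =
      ∑ g ∈ fcPaths (n + 1) (x - if σ then 1 else -1), w (Fin.snoc g σ) := by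
  refine sum_nbij' Fin.init (fun g => Fin.snoc g σ) (fun f hf => ?_) (fun g hg => ?_)
    (fun f hf => ?_) (fun g _ => Fin.init_snoc _ _) (fun f hf => ?_)
  · obtain ⟨hf, hlast⟩ := mem_filter.mp hf
    rwa [eq_snoc_of_fcStep_last f hlast, snoc_mem_fcPaths] at hf
  · exact mem_filter.mpr ⟨(snoc_mem_fcPaths g σ x).mpr hg, fcStep_snoc_self g σ⟩
  · exact (eq_snoc_of_fcStep_last f (mem_filter.mp hf).2).symm
  · rw [← eq_snoc_of_fcStep_last f (mem_filter.mp hf).2]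

def pathSum (n : ℕ) (x : ℤ) (σ : Bool) : ℂ :=
  ∑ f ∈ fcPaths (n + 1) x with fcStep f n = σ, (-I) ^ fcTurns f

lemma pathSum_succ (n : ℕ) (x : ℤ) (σ : Bool) :
    pathSum (n + 1) x σ = pathSum n (x - if σ then 1 else -1) σ +
      -I * pathSum n (x - if σ then 1 else -1) (!σ) := by
  rw [pathSum, sum_fcPaths_filter_fcStep_last, pathSum, pathSum, mul_sum,
    ← sum_filter_add_sum_filter_not _ (fun g => fcStep g n = σ)]
  congr 1
  · exact sum_congr rfl fun g hg => by rw [fcTurns_snoc, if_pos (mem_filter.mp hg).2, add_zero]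
  · refine sum_congr (filter_congr fun g _ => by cases σ <;> simp) fun g hg => ?_
    rw [fcTurns_snoc, if_neg (by rw [(mem_filter.mp hg).2]; exact Bool.not_ne_self σ), pow_succ,
      mul_comm]

lemma pathSum_zero (x : ℤ) (σ : Bool) : pathSum 0 x σ = if x = 1 ∧ σ then 1 else 0 := by
  rw [pathSum, sum_filter, fcPaths, sum_filter, ← (Equiv.funUnique (Fin 1) Bool).symm.sum_comp,
    Fintype.sum_bool]
  by_cases hx : x = 1
  · subst hx
    cases σ <;> simp [fcStep, fcPos, fcTurns]
  · cases σ <;> simp [fcStep, fcPos, hx, Ne.symm hx]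

lemma pathSum_true_and_false (n : ℕ) (x : ℤ) :
    pathSum n x true = U n x ∧ pathSum n x false = -I * V n x := by
  induction n generalizing x with
  | zero => simp [pathSum_zero, U_zero, V_zero, apply_ite]
  | succ n ih =>
    have h₁ := fun y => (ih y).1
    have h₂ := fun y => (ih y).2
    simp only [pathSum_succ, Bool.not_true, Bool.not_false, Bool.false_eq_true, ↓reduceIte, h₁, h₂,
      sub_neg_eq_add, U_succ, V_succ]
    push_cast
    exact ⟨by linear_combination (V n (x - 1) : ℂ) * I_sq, by ring⟩

lemma sum_fcPaths (n : ℕ) (x : ℤ) :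
    ∑ f ∈ fcPaths (n + 1) x, (-I) ^ fcTurns f = U n x - I * V n x := by
  rw [← sum_filter_add_sum_filter_not _ (fun f => fcStep f n = true)]
  simp only [Bool.not_eq_true]
  rw [← pathSum, ← pathSum, (pathSum_true_and_false n x).1, (pathSum_true_and_false n x).2]
  ring

lemma fcAmp_one_div_self {ε : ℝ} (hε : ε ≠ 0) (n : ℕ) (x : ℤ) :
    fcAmp (1 / ε) ε x (n + 1) = ((2 : ℝ) ^ (-(n : ℝ) / 2) : ℝ) * (V n x + U n x * I) := by
  have hm : (1 / ε) * ε = 1 := one_div_mul_cancel hε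
  have hw : ∀ k : ℕ, (-I * ((1 / ε : ℝ) * (ε : ℂ))) ^ k = (-I) ^ k := fun k => by
    rw [← ofReal_mul, hm, ofReal_one, mul_one]
  rw [fcAmp, show (1 / ε) ^ 2 * ε ^ 2 = 1 by rw [← mul_pow, hm, one_pow], one_add_one_eq_two]
  simp only [hw]
  rw [sum_fcPaths, show (1 - ((n + 1 : ℕ) : ℝ)) / 2 = -(n : ℝ) / 2 by push_cast; ring]
  linear_combination (-(((2 : ℝ) ^ (-(n : ℝ) / 2) : ℝ) * V n x : ℂ)) * I_sq

lemma re_sq_add_im_sq_fcAmp_one_div_self {ε : ℝ} (hε : ε ≠ 0) (n : ℕ) (x : ℤ) :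
    (fcAmp (1 / ε) ε x (n + 1)).re ^ 2 + (fcAmp (1 / ε) ε x (n + 1)).im ^ 2 =
      (U n x ^ 2 + V n x ^ 2) / 2 ^ n := by
  have h : ((2 : ℝ) ^ (-(n : ℝ) / 2)) ^ 2 = 1 / 2 ^ n := by
    rw [← Real.rpow_natCast, ← Real.rpow_mul zero_le_two]
    simp [Real.rpow_neg zero_le_two]
  rw [fcAmp_one_div_self hε]
  simp only [mul_re, mul_im, ofReal_re, ofReal_im, add_re, add_im, I_re, I_im, mul_zero, zero_mul,
    sub_zero, add_zero, zero_add, mul_one]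
  rw [mul_pow, mul_pow, h]
  ring

end Paths

section Wallis

open Real intervalIntegral

def wallisJ (k : ℕ) : ℝ := ∫ x in 0..π, sin x ^ (2 * k) / (1 + sin x ^ 2)

lemma intervalIntegrable_sin_pow_div (k : ℕ) (a b : ℝ) :
    IntervalIntegrable (fun x => sin x ^ (2 * k) / (1 + sin x ^ 2)) MeasureTheory.volume a b :=
  (by fun_prop (disch := exact fun x => by positivity) :
    Continuous fun x => sin x ^ (2 * k) / (1 + sin x ^ 2)).intervalIntegrable a b

lemma wallisJ_add_wallisJ_succ (k : ℕ) :
    wallisJ k + wallisJ (k + 1) = π * (k.centralBinom / 4 ^ k) := by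
  rw [wallisJ, wallisJ, ← integral_add (intervalIntegrable_sin_pow_div k 0 π)
    (intervalIntegrable_sin_pow_div (k + 1) 0 π), Nat.centralBinom_div_four_pow,
    ← integral_sin_pow_even]
  refine integral_congr fun x _ => ?_
  have := (by positivity : 0 < 1 + sin x ^ 2)
  field_simp
  ring

lemma wallisJ_nonneg (k : ℕ) : 0 ≤ wallisJ k :=
  integral_nonneg pi_pos.le fun x _ => by rw [pow_mul]; positivity

lemma wallisJ_antitone : Antitone wallisJ := by
  refine antitone_nat_of_succ_le fun k => integral_mono_on pi_pos.le
    (intervalIntegrable_sin_pow_div _ 0 π) (intervalIntegrable_sin_pow_div _ 0 π) fun x hx => ?_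
  have h₀ : 0 ≤ sin x := sin_nonneg_of_nonneg_of_le_pi hx.1 hx.2
  gcongr ?_ / _
  exact pow_le_pow_of_le_one h₀ (sin_le_one x) (by omega)

lemma wallisJ_zero : wallisJ 0 = π / √2 := by
  have h := integral_eq_sub_of_hasDerivAt (fun x _ => hasDerivAt_sqrt_two_div_one_add_sin_sq x)
    ((by fun_prop (disch := exact fun x => by positivity) :
      Continuous fun x => √2 / (1 + sin x ^ 2)).intervalIntegrable 0 π)
  simp only [sin_pi, sin_zero, cos_pi, cos_zero, zero_mul, mul_zero, zero_div, arctan_zero,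
    add_zero, sub_zero] at h
  rw [wallisJ, eq_div_iff (by positivity)]
  simpa [div_eq_mul_inv, mul_comm] using h

lemma sum_range_neg_one_pow_mul_centralBinom_div (K : ℕ) :
    ∑ k ∈ range K, (-1) ^ k * (k.centralBinom / 4 ^ k : ℝ) = 1 / √2 - (-1) ^ K * wallisJ K / π := by
  induction K with
  | zero => rw [sum_range_zero, wallisJ_zero]; field_simp; ring
  | succ K ih =>
    have h : 4 ^ K * (wallisJ K + wallisJ (K + 1)) = π * K.centralBinom := by
      rw [wallisJ_add_wallisJ_succ]
      field_simp
    rw [sum_range_succ, ih]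
    field_simp
    linear_combination (-(√2 * (-1) ^ K)) * h

lemma sum_range_wallisJ_mem_Icc (N : ℕ) :
    ∑ n ∈ range N, (-1) ^ (n / 2 + 1) * wallisJ (n / 2 + 1) ∈ Set.Icc (-2 * π) 0 := by
  have hJ : ∀ K, ∑ k ∈ range K, (-1) ^ k * wallisJ (k + 1) ∈ Set.Icc 0 π := fun K => by
    have hanti : Antitone fun k => wallisJ (k + 1) := fun _ _ h => wallisJ_antitone (by omega)
    refine Set.Icc_subset_Icc_right ?_
      (hanti.sum_range_neg_one_pow_mul_mem_Icc (fun k => wallisJ_nonneg _) K)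
    have h := wallisJ_add_wallisJ_succ 0
    simp only [Nat.centralBinom_zero] at h
    linarith [wallisJ_nonneg 0]
  simp only [pow_succ, mul_neg_one, neg_mul]
  rw [sum_range_comp_div_two (fun k => -((-1) ^ k * wallisJ (k + 1))), sum_neg_distrib,
    sum_neg_distrib]
  obtain ⟨h₁, h₂⟩ := hJ (N / 2)
  obtain ⟨h₃, h₄⟩ := hJ ((N + 1) / 2)
  constructor <;> linarith

end Wallis

open Real

lemma moment_succ_div_two_pow (n : ℕ) :
    moment (n + 1) / 2 ^ (n + 1) = moment n / 2 ^ n + 1 - 2 * (sumSqV (n + 1) / 2 ^ (n + 1)) := by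
  rw [moment_succ, sumSqV_succ, pow_succ]
  field_simp
  ring

lemma moment_div_two_pow (N : ℕ) :
    moment N / 2 ^ N = (1 - 1 / √2) * (N + 1) + 1 / √2 +
      (∑ n ∈ range N, (-1) ^ (n / 2 + 1) * wallisJ (n / 2 + 1)) / π := by
  induction N with
  | zero => simp [moment_zero]
  | succ N ih =>
    rw [moment_succ_div_two_pow, sumSqV_eq, ih, show (N + 1 + 1) / 2 = N / 2 + 1 by omega,
      sum_range_neg_one_pow_mul_centralBinom_div, sum_range_succ]
    field_simp
    push_cast
    ring

lemma abs_moment_div_two_pow_sub_le (N : ℕ) :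
    |moment N / 2 ^ N - (1 - 1 / √2) * (N + 1)| ≤ 2 := by
  obtain ⟨h₁, h₂⟩ := sum_range_wallisJ_mem_Icc N
  have h₃ : -2 ≤ (∑ n ∈ range N, (-1) ^ (n / 2 + 1) * wallisJ (n / 2 + 1)) / π := by
    rwa [le_div_iff₀ pi_pos]
  have h₄ : (∑ n ∈ range N, (-1) ^ (n / 2 + 1) * wallisJ (n / 2 + 1)) / π ≤ 0 :=
    div_nonpos_of_nonpos_of_nonneg h₂ pi_pos.le
  have h₅ : 0 < 1 / √2 := by positivity
  have h₆ : 1 / √2 ≤ 1 := by rw [div_le_one (by positivity)]; exact Real.one_le_sqrt.mpr one_le_two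
  rw [moment_div_two_pow, abs_le]
  constructor <;> linarith

end FeynmanCheckers

/-- For the mass `m = 1/ε`, the expectation of the average electron velocity equals
`1 − 1/√2 + O(ε/T)`, uniformly over all `ε > 0` and `T ∈ εℤ₊`. -/
theorem stmt3 : ∃ C : ℝ, 0 < C ∧ ∀ ε : ℝ, 0 < ε → ∀ N : ℕ, 0 < N →
    |(∑' X : ℤ, (ε * (X : ℝ) / (ε * N)) *
        ((fcAmp (1/ε) ε X N).re ^ 2 + (fcAmp (1/ε) ε X N).im ^ 2))
      - (1 - 1 / Real.sqrt 2)| ≤ C * (ε / (ε * N)) := by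
  refine ⟨2, two_pos, fun ε hε N hN => ?_⟩
  obtain ⟨n, rfl⟩ : ∃ n, N = n + 1 := ⟨N - 1, by omega⟩
  have hn : (0 : ℝ) < n + 1 := by positivity
  have hsum : ∑' X : ℤ, (ε * (X : ℝ) / (ε * (n + 1 : ℕ))) *
      ((fcAmp (1 / ε) ε X (n + 1)).re ^ 2 + (fcAmp (1 / ε) ε X (n + 1)).im ^ 2) =
      FeynmanCheckers.moment n / 2 ^ n / (n + 1) := by
    rw [FeynmanCheckers.moment, ← tsum_div_const, ← tsum_div_const]
    refine tsum_congr fun X => ?_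
    rw [FeynmanCheckers.re_sq_add_im_sq_fcAmp_one_div_self hε.ne']
    push_cast
    field_simp
  rw [hsum, show ε / (ε * ((n + 1 : ℕ) : ℝ)) = 1 / (n + 1) by push_cast; field_simp,
    show FeynmanCheckers.moment n / 2 ^ n / (n + 1) - (1 - 1 / √2) =
      (FeynmanCheckers.moment n / 2 ^ n - (1 - 1 / √2) * (n + 1)) / (n + 1) by field_simp,
    abs_div, abs_of_pos hn, mul_one_div]
  exact div_le_div_of_nonneg_right (FeynmanCheckers.abs_moment_div_two_pow_sub_le n) hn.le
end
end

section
/- For every ε > 0, m ≥ 0, and t ∈ εℤ₊, we have Σ_{x∈εℤ} a₁(x,t,m,ε) = sin(((t−ε)/ε)·arctan(mε)) and Σ_{x∈εℤ} a₂(x,t,m,ε) = cos(((t−ε)/ε)·arctan(mε)). -/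
/-!
A path that starts to the right is determined by its set of turns, which can be any subset of
`{0, …, n - 2}`. Summing `(-imε)^turns` over all endpoints therefore gives `(1 - imε)^(n-1)` by
the binomial theorem. In polar form `1 - imε = √(1 + m²ε²) · e^{-iθ}` with `θ = arctan (mε)`, so
the prefactor cancels the modulus and the total amplitude is
`i · e^{-i(n-1)θ} = sin ((n-1)θ) + i cos ((n-1)θ)`; only finitely many `x` contribute.
-/

noncomputable section

open Finset Complex

def fcStartRight (n : ℕ) : Finset (Fin n → Bool) :=
  univ.filter fun f => ∀ i : Fin n, (i : ℕ) = 0 → f i = true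

def fcTurnSet {n : ℕ} (f : Fin n → Bool) : Finset ℕ :=
  (range (n - 1)).filter fun i => fcStep f i ≠ fcStep f (i + 1)

/-- The path whose turns are exactly at `t`: it moves right after an even number of turns. -/
def fcOfTurnSet (n : ℕ) (t : Finset ℕ) : Fin n → Bool :=
  fun i => decide (Even #(t.filter (· < (i : ℕ))))

lemma card_filter_lt_succ (t : Finset ℕ) (i : ℕ) :
    #(t.filter (· < i + 1)) = #(t.filter (· < i)) + if i ∈ t then 1 else 0 := by
  have : t.filter (· < i + 1) = t.filter (· < i) ∪ t.filter (· = i) := by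
    ext j; simp [le_iff_lt_or_eq, and_or_left]
  rw [this, card_union_of_disjoint (disjoint_filter.2 fun j _ h => h.ne), filter_eq' t i]
  split_ifs <;> simp

lemma fcStep_fcOfTurnSet (n : ℕ) (t : Finset ℕ) {i : ℕ} (hi : i < n) :
    fcStep (fcOfTurnSet n t) i = decide (Even #(t.filter (· < i))) := by
  simp [fcStep, fcOfTurnSet, hi]

lemma fcStep_eq_decide_even {n : ℕ} {f : Fin n → Bool} (hf : f ∈ fcStartRight n) {i : ℕ}
    (hi : i < n) : fcStep f i = decide (Even #((fcTurnSet f).filter (· < i))) := by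
  induction i with
  | zero => simp_all [fcStartRight, fcStep]
  | succ i ih =>
    have hturn : i ∈ fcTurnSet f ↔ fcStep f i ≠ fcStep f (i + 1) := by
      simp only [fcTurnSet, mem_filter, mem_range]; exact and_iff_right (by omega)
    rw [card_filter_lt_succ]
    by_cases hi' : i ∈ fcTurnSet f
    · have hflip : fcStep f (i + 1) = !fcStep f i := Bool.eq_not.2 (hturn.1 hi').symm
      simp [hi', hflip, ih (by omega), Nat.even_add_one, -Nat.not_even_iff_odd]
    · rw [if_neg hi', add_zero, ← ih (by omega)]
      exact (not_not.1 (mt hturn.2 hi')).symm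

lemma mem_fcTurnSet_fcOfTurnSet {n : ℕ} {t : Finset ℕ} {i : ℕ} (hi : i < n - 1) :
    i ∈ fcTurnSet (fcOfTurnSet n t) ↔ i ∈ t := by
  simp only [fcTurnSet, mem_filter, mem_range, hi, true_and,
    fcStep_fcOfTurnSet n t (show i < n by omega), fcStep_fcOfTurnSet n t (show i + 1 < n by omega),
    card_filter_lt_succ]
  split_ifs <;> simp_all [Nat.even_add_one, -Nat.not_even_iff_odd]

lemma sum_pow_fcTurns {R : Type*} [CommSemiring R] (n : ℕ) (z : R) :
    ∑ f ∈ fcStartRight n, z ^ fcTurns f = (1 + z) ^ (n - 1) := by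
  have h := sum_pow_mul_eq_add_pow z 1 (range (n - 1))
  simp only [one_pow, mul_one, card_range] at h
  rw [add_comm, ← h]
  refine sum_nbij' fcTurnSet (fcOfTurnSet n) (fun f _ => mem_powerset.2 (filter_subset _ _))
    (fun t _ => by simp +contextual [fcStartRight, fcOfTurnSet]) (fun f hf => ?_) (fun t ht => ?_)
    (fun f _ => rfl)
  · funext i
    have := fcStep_eq_decide_even hf i.isLt
    simp_all [fcStep, fcOfTurnSet]
  · ext i
    exact ⟨fun hi => (mem_fcTurnSet_fcOfTurnSet (mem_range.1 (filter_subset _ _ hi))).1 hi,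
      fun hi => (mem_fcTurnSet_fcOfTurnSet (mem_range.1 (mem_powerset.1 ht hi))).2 hi⟩

lemma fcPos_mem_Icc {n : ℕ} (f : Fin n → Bool) : fcPos f n ∈ Icc (-(n : ℤ)) n :=
  mem_Icc.2 <| abs_le.1 <| (abs_sum_le_sum_abs _ _).trans (by simp [apply_ite])

lemma sum_sum_fcPaths {M : Type*} [AddCommMonoid M] (n : ℕ) (g : (Fin n → Bool) → M) :
    ∑ x ∈ Icc (-(n : ℤ)) n, ∑ f ∈ fcPaths n x, g f = ∑ f ∈ fcStartRight n, g f := by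
  simp only [fcPaths, ← filter_filter]
  exact sum_fiberwise_of_maps_to (fun f _ => fcPos_mem_Icc f) g

lemma fcAmp_eq_zero {m ε : ℝ} {n : ℕ} {x : ℤ} (hx : x ∉ Icc (-(n : ℤ)) n) :
    fcAmp m ε x n = 0 := by
  have : fcPaths n x = ∅ := by
    refine eq_empty_of_forall_notMem fun f hf => hx ?_
    simp only [fcPaths, mem_filter] at hf
    exact hf.2.2 ▸ fcPos_mem_Icc f
  simp [fcAmp, this]

lemma one_sub_mul_I_eq (a : ℝ) :
    (1 - a * I : ℂ) = √(1 + a ^ 2) * exp (-Real.arctan a * I) := by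
  have hr : (√(1 + a ^ 2) : ℂ) ≠ 0 := ofReal_ne_zero.2 (Real.sqrt_pos.2 (by positivity)).ne'
  rw [exp_mul_I, cos_neg, sin_neg, ← ofReal_cos, ← ofReal_sin, Real.cos_arctan, Real.sin_arctan]
  push_cast
  field_simp
  ring

lemma ofReal_rpow_mul_one_sub_mul_I_pow (a : ℝ) (k : ℕ) :
    (((1 + a ^ 2) ^ (-(k : ℝ) / 2) : ℝ) : ℂ) * (1 - a * I) ^ k =
      exp (↑(-(k * Real.arctan a)) * I) := by
  have hpos : 0 < 1 + a ^ 2 := by positivity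
  have hnorm : (1 + a ^ 2) ^ (-(k : ℝ) / 2) * √(1 + a ^ 2) ^ k = 1 := by
    rw [← Real.rpow_natCast (√(1 + a ^ 2)) k, Real.sqrt_eq_rpow, ← Real.rpow_mul hpos.le,
      ← Real.rpow_add hpos]
    ring_nf
    exact Real.rpow_zero _
  rw [one_sub_mul_I_eq, mul_pow, ← exp_nat_mul, ← mul_assoc, ← ofReal_pow, ← ofReal_mul, hnorm]
  push_cast
  ring_nf

lemma sum_fcAmp (m ε : ℝ) (n : ℕ) :
    ∑ x ∈ Icc (-(n : ℤ)) n, fcAmp m ε x n =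
      (((1 + m ^ 2 * ε ^ 2) ^ ((1 - (n : ℝ)) / 2) : ℝ) : ℂ) * I * (1 - ↑(m * ε) * I) ^ (n - 1) := by
  simp only [fcAmp, ← mul_sum, sum_sum_fcPaths, sum_pow_fcTurns]
  push_cast
  ring_nf

lemma hasSum_fcAmp (m ε : ℝ) {n : ℕ} (hn : 0 < n) :
    HasSum (fun x => fcAmp m ε x n)
      (Real.sin ((n - 1) * Real.arctan (m * ε)) + Real.cos ((n - 1) * Real.arctan (m * ε)) * I) := by
  obtain ⟨k, rfl⟩ : ∃ k, n = k + 1 := ⟨n - 1, by omega⟩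
  convert hasSum_sum_of_ne_finset_zero (L := .unconditional ℤ) fun x hx => fcAmp_eq_zero hx
    using 1
  have hexp : (1 - ((k + 1 : ℕ) : ℝ)) / 2 = -(k : ℝ) / 2 := by push_cast; ring
  rw [sum_fcAmp, hexp, ← mul_pow, Nat.add_sub_cancel, mul_right_comm,
    ofReal_rpow_mul_one_sub_mul_I_pow, exp_mul_I, ← ofReal_cos, ← ofReal_sin, Real.cos_neg,
    Real.sin_neg, Nat.cast_add_one, add_sub_cancel_right]
  push_cast
  ring_nf
  rw [I_sq]
  ring

theorem stmt4_general (m ε : ℝ) (hε : 0 < ε) (t : ℝ) (n : ℕ) (hn : 0 < n)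
    (ht : t = ε * n) :
    (∑' X : ℤ, (fcAmp m ε X n).re
        = Real.sin (((t - ε) / ε) * Real.arctan (m * ε))) ∧
    (∑' X : ℤ, (fcAmp m ε X n).im
        = Real.cos (((t - ε) / ε) * Real.arctan (m * ε))) := by
  have hcoef : (t - ε) / ε = n - 1 := by rw [ht]; field_simp
  have h := hasSum_fcAmp m ε hn
  refine ⟨(hasSum_re h).tsum_eq.trans ?_, (hasSum_im h).tsum_eq.trans ?_⟩ <;>
    simp [hcoef, -ofReal_sin, -ofReal_cos]

/-- Linear identities: for `t = εn ∈ εℤ₊`,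
`Σ_x a₁(x,t,m,ε) = sin(((t−ε)/ε)·arctan(mε))` and
`Σ_x a₂(x,t,m,ε) = cos(((t−ε)/ε)·arctan(mε))`. -/
theorem stmt4 (m ε : ℝ) (hε : 0 < ε) (hm : 0 ≤ m) (t : ℝ) (n : ℕ) (hn : 0 < n)
    (ht : t = ε * n) :
    (∑' X : ℤ, (fcAmp m ε X n).re
        = Real.sin (((t - ε) / ε) * Real.arctan (m * ε))) ∧
    (∑' X : ℤ, (fcAmp m ε X n).im
        = Real.cos (((t - ε) / ε) * Real.arctan (m * ε))) :=
  stmt4_general m ε hε t n hn ht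
end
end
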